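/- arXiv:2309.03676 — 5 statements merged into one kernel-verified Lean document; each statement's English description precedes it below -/
import Mathlib

section
/- Let C be a linear code in F_q^n and S ⊆ T ⊆ [n]. Then |C(S,T)| = |C| * Σ_{A ⊆ S} (-1)^{|A|} |C^⊥(T^c ∪ A)| / q^{n - |T| + |A|}. -/
open Finset

variable {F : Type*} [Field F] [Fintype F] [DecidableEq F]

/-- Hamming weight of a vector. -/
def wt {n : ℕ} (x : Fin n → F) : ℕ := (Finset.univ.filter fun i => x i ≠ 0).card

/-- Support of a vector, as a finset. -/
def supp {n : ℕ} (x : Fin n → F) : Finset (Fin n) := Finset.univ.filter fun i => x i ≠ 0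

/-- The dual code with respect to the standard bilinear form. -/
def dualCode {ι : Type*} [Fintype ι] (C : Submodule F (ι → F)) : Submodule F (ι → F) where
  carrier := {x | ∀ y ∈ C, ∑ i, x i * y i = 0}
  add_mem' := by
    intro a b ha hb y hy
    simp only [Set.mem_setOf_eq] at *
    simp only [Pi.add_apply, add_mul, Finset.sum_add_distrib, ha y hy, hb y hy, add_zero]
  zero_mem' := by intro y hy; simp
  smul_mem' := by
    intro c a ha y hy
    simp only [Set.mem_setOf_eq] at *
    simp only [Pi.smul_apply, smul_eq_mul, mul_assoc, ← Finset.mul_sum, ha y hy, mul_zero]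

/-- Refined weight enumerator `W_i^S(C)`. -/
noncomputable def W {n : ℕ} (C : Submodule F (Fin n → F)) (i : ℕ) (S : Finset (Fin n)) : ℕ :=
  Set.ncard {x : Fin n → F | x ∈ C ∧ wt x = i ∧ S ⊆ supp x}

/-- Shortening of a code to a set of coordinates. -/
def shortening {ι : Type*} [Fintype ι] (C : Submodule F (ι → F)) (S : Finset ι) :
    Submodule F (ι → F) where
  carrier := {x | x ∈ C ∧ ∀ i, i ∉ S → x i = 0}
  add_mem' := by
    rintro a b ⟨ha, ha0⟩ ⟨hb, hb0⟩
    exact ⟨C.add_mem ha hb, fun i hi => by simp [ha0 i hi, hb0 i hi]⟩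
  zero_mem' := ⟨C.zero_mem, fun i _ => rfl⟩
  smul_mem' := by
    rintro c a ⟨ha, ha0⟩
    exact ⟨C.smul_mem c ha, fun i hi => by simp [ha0 i hi]⟩

/-- Projection (puncturing) onto the coordinates indexed by `S`. -/
def projMap {ι : Type*} [Fintype ι] (S : Finset ι) : (ι → F) →ₗ[F] ({ i // i ∈ S } → F) :=
  LinearMap.funLeft F F Subtype.val

/-- The `i`-th generalized Hamming weight of a code. -/
noncomputable def genWeight {n : ℕ} (C : Submodule F (Fin n → F)) (i : ℕ) : ℕ :=
  sInf {w | ∃ D : Submodule F (Fin n → F), D ≤ C ∧ Module.finrank F D = i ∧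
    Set.ncard {j : Fin n | ∃ x ∈ D, x j ≠ 0} = w}

/-- A code is nondegenerate if no coordinate vanishes identically. -/
def Nondegenerate {n : ℕ} (C : Submodule F (Fin n → F)) : Prop :=
  ∀ i : Fin n, ∃ x ∈ C, x i ≠ 0

/-- A code has locality `r`. -/
def HasLocality {n : ℕ} (C : Submodule F (Fin n → F)) (r : ℕ) : Prop :=
  ∀ i : Fin n, ∃ S : Finset (Fin n), i ∉ S ∧ S.card ≤ r ∧
    ∀ x ∈ C, ∀ y ∈ C, (∀ j ∈ S, x j = y j) → x i = y i

/-- A nondegenerate code has locality `(r, δ)`. -/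
def HasLocalityRD {n : ℕ} (C : Submodule F (Fin n → F)) (r δ : ℕ) : Prop :=
  (∀ i : Fin n, ∃ x ∈ C, x i ≠ 0) ∧
  ∀ i : Fin n, ∃ S : Finset (Fin n), i ∉ S ∧ S.card ≤ r + δ ∧
    ∀ x ∈ C, (∃ j ∈ insert i S, x j ≠ 0) →
      δ ≤ ((insert i S).filter fun j => x j ≠ 0).card

/-! Fixing the coordinates of `S` where a word of `C(T)` vanishes, inclusion–exclusion writes
`|C(S,T)|` as `∑_{A ⊆ S} (-1)^|A| |C(T \ A)|`. For the space `E_U` of words supported in `U`,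
`C(U) = C ⊓ E_U` and `C^⊥(Uᶜ) = (C ⊔ E_U)^⊥`, so the dimension formula for `C ⊔ E_U` and
`C ⊓ E_U` gives `|C(U)| q^{n - |U|} = |C| |C^⊥(Uᶜ)|`. -/

section Shortening

variable {K ι : Type*} [Field K] [Fintype ι]

theorem mem_shortening {C : Submodule K (ι → K)} {U : Finset ι} {x : ι → K} :
    x ∈ shortening C U ↔ x ∈ C ∧ ∀ i ∉ U, x i = 0 :=
  Iff.rfl

theorem shortening_eq_inf (C : Submodule K (ι → K)) (U : Finset ι) :
    shortening C U = C ⊓ shortening ⊤ U := by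
  ext x
  simp [mem_shortening]

theorem mem_shortening_sdiff [DecidableEq ι] {C : Submodule K (ι → K)} {T A : Finset ι}
    {x : ι → K} : x ∈ shortening C (T \ A) ↔ x ∈ shortening C T ∧ ∀ i ∈ A, x i = 0 := by
  simp only [mem_shortening, mem_sdiff, not_and_or, not_not]
  grind

theorem finrank_shortening_top (U : Finset ι) :
    Module.finrank K (shortening (⊤ : Submodule K (ι → K)) U) = #U := by
  classical
  have hU : shortening (⊤ : Submodule K (ι → K)) U =
      ⨅ i ∈ (U : Set ι)ᶜ, LinearMap.ker (LinearMap.proj i : (ι → K) →ₗ[K] K) := by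
    ext x
    simp [mem_shortening]
  rw [hU, (LinearMap.iInfKerProjEquiv K (fun _ ↦ K) disjoint_compl_right
    (by simp)).finrank_eq]
  simp

theorem dualCode_eq_comap_dualAnnihilator [DecidableEq ι] (C : Submodule K (ι → K)) :
    dualCode C = C.dualAnnihilator.comap (dotProductEquiv K ι).toLinearMap := by
  ext x
  simp [dualCode, Submodule.mem_dualAnnihilator, dotProduct]

theorem finrank_add_finrank_dualCode (C : Submodule K (ι → K)) :
    Module.finrank K C + Module.finrank K (dualCode C) = Fintype.card ι := by
  classical
  rw [dualCode_eq_comap_dualAnnihilator, Submodule.comap_equiv_eq_map_symm,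
    LinearEquiv.finrank_map_eq, Subspace.finrank_add_finrank_dualAnnihilator_eq,
    Module.finrank_fintype_fun_eq_card]

theorem dualCode_sup (C D : Submodule K (ι → K)) :
    dualCode (C ⊔ D) = dualCode C ⊓ dualCode D := by
  classical
  simp only [dualCode_eq_comap_dualAnnihilator, Submodule.dualAnnihilator_sup_eq,
    Submodule.comap_inf]

theorem dualCode_shortening_top [DecidableEq ι] (U : Finset ι) :
    dualCode (shortening (⊤ : Submodule K (ι → K)) U) = shortening ⊤ Uᶜ := by
  ext x
  refine ⟨fun hx ↦ ⟨trivial, fun i hi ↦ ?_⟩, fun ⟨_, hx⟩ y ⟨_, hy⟩ ↦ ?_⟩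
  · have hsingle : Pi.single i 1 ∈ shortening (⊤ : Submodule K (ι → K)) U :=
      ⟨trivial, fun j hj ↦ Pi.single_eq_of_ne (by rintro rfl; simp_all) 1⟩
    simpa [Pi.single_apply] using hx _ hsingle
  · refine sum_eq_zero fun i _ ↦ ?_
    by_cases hi : i ∈ U
    · simp [hx i (by simpa using hi)]
    · simp [hy i hi]

theorem shortening_dualCode_compl [DecidableEq ι] (C : Submodule K (ι → K)) (U : Finset ι) :
    shortening (dualCode C) Uᶜ = dualCode (C ⊔ shortening ⊤ U) := by
  rw [dualCode_sup, dualCode_shortening_top, shortening_eq_inf]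

theorem finrank_shortening_add_card_compl [DecidableEq ι] (C : Submodule K (ι → K))
    (U : Finset ι) :
    Module.finrank K (shortening C U) + #Uᶜ =
      Module.finrank K C + Module.finrank K (shortening (dualCode C) Uᶜ) := by
  have hsup := Submodule.finrank_sup_add_finrank_inf_eq C (shortening ⊤ U)
  have hdual := finrank_add_finrank_dualCode (C ⊔ shortening ⊤ U)
  rw [← shortening_eq_inf, finrank_shortening_top] at hsup
  rw [← shortening_dualCode_compl] at hdual
  have hU := card_add_card_compl U
  omega

theorem natCard_shortening_mul_pow [DecidableEq ι] (C : Submodule K (ι → K)) (U : Finset ι) :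
    Nat.card (shortening C U) * Nat.card K ^ #Uᶜ =
      Nat.card C * Nat.card (shortening (dualCode C) Uᶜ) := by
  rw [Module.natCard_eq_pow_finrank (K := K) (V := shortening C U),
    Module.natCard_eq_pow_finrank (K := K) (V := C),
    Module.natCard_eq_pow_finrank (K := K) (V := shortening (dualCode C) Uᶜ),
    ← pow_add, ← pow_add, finrank_shortening_add_card_compl]

end Shortening

theorem ncard_forall_ne_zero_eq_sum_powerset {M ι : Type*} [Zero M] [Fintype M] [Fintype ι]
    [DecidableEq ι] (P : Set (ι → M)) (S : Finset ι) :
    (Set.ncard {x | x ∈ P ∧ ∀ i ∈ S, x i ≠ 0} : ℤ) =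
      ∑ A ∈ S.powerset, (-1) ^ #A * (Set.ncard {x | x ∈ P ∧ ∀ i ∈ A, x i = 0} : ℤ) := by
  classical
  let Z (i : ι) : Finset (ι → M) := {x | x i = 0}
  have hS : {x | x ∈ P ∧ ∀ i ∈ S, x i ≠ 0} = ↑({x ∈ S.inf fun i ↦ (Z i)ᶜ | x ∈ P}) := by
    ext x
    simp [Z, mem_inf, and_comm]
  have hA (A : Finset ι) : {x | x ∈ P ∧ ∀ i ∈ A, x i = 0} = ↑({x ∈ A.inf Z | x ∈ P}) := by
    ext x
    simp [Z, mem_inf, and_comm]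
  simpa only [hS, hA, Set.ncard_coe_finset, sum_boole, smul_eq_mul] using
    inclusion_exclusion_sum_inf_compl S Z fun x ↦ if x ∈ P then (1 : ℤ) else 0

section Support

variable {K : Type*} [Field K] [DecidableEq K] {n : ℕ}

theorem supp_subset_iff {x : Fin n → K} {U : Finset (Fin n)} :
    supp x ⊆ U ↔ ∀ i ∉ U, x i = 0 := by
  simp [supp, subset_iff, not_imp_comm]

theorem subset_supp_iff {x : Fin n → K} {S : Finset (Fin n)} :
    S ⊆ supp x ↔ ∀ i ∈ S, x i ≠ 0 := by
  simp [supp, subset_iff]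

theorem setOf_mem_and_supp_subset (C : Submodule K (Fin n → K)) (U : Finset (Fin n)) :
    {x | x ∈ C ∧ supp x ⊆ U} = (shortening C U : Set (Fin n → K)) := by
  ext x
  simp [supp_subset_iff, mem_shortening]

theorem setOf_subset_supp_and_supp_subset (C : Submodule K (Fin n → K)) (S T : Finset (Fin n)) :
    {x | x ∈ C ∧ S ⊆ supp x ∧ supp x ⊆ T} =
      {x | x ∈ (shortening C T : Set (Fin n → K)) ∧ ∀ i ∈ S, x i ≠ 0} := by
  ext x
  simp only [Set.mem_ofPred_eq, SetLike.mem_coe, mem_shortening, subset_supp_iff, supp_subset_iff]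
  tauto

theorem setOf_mem_shortening_and_forall_eq_zero (C : Submodule K (Fin n → K))
    (T A : Finset (Fin n)) :
    {x | x ∈ (shortening C T : Set (Fin n → K)) ∧ ∀ i ∈ A, x i = 0} =
      {x | x ∈ C ∧ supp x ⊆ T \ A} := by
  rw [setOf_mem_and_supp_subset]
  ext x
  exact mem_shortening_sdiff.symm

theorem ncard_supp_subset_mul_pow [Fintype K] (C : Submodule K (Fin n → K)) (U : Finset (Fin n)) :
    Set.ncard {x | x ∈ C ∧ supp x ⊆ U} * Fintype.card K ^ (n - #U) =
      Set.ncard (C : Set (Fin n → K)) * Set.ncard {x | x ∈ dualCode C ∧ supp x ⊆ Uᶜ} := by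
  have hU : n - #U = #Uᶜ := by simp [card_compl]
  simp only [setOf_mem_and_supp_subset, hU, ← Nat.card_coe_set_eq, SetLike.coe_sort_coe,
    ← Nat.card_eq_fintype_card]
  exact natCard_shortening_mul_pow C U

theorem ncard_supp_subset_sdiff [Fintype K] (C : Submodule K (Fin n → K)) {T A : Finset (Fin n)}
    (hAT : A ⊆ T) :
    (Set.ncard {x | x ∈ C ∧ supp x ⊆ T \ A} : ℝ) =
      Set.ncard (C : Set (Fin n → K)) * Set.ncard {x | x ∈ dualCode C ∧ supp x ⊆ Tᶜ ∪ A} /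
        (Fintype.card K : ℝ) ^ (n - #T + #A) := by
  have hdual := ncard_supp_subset_mul_pow C (T \ A)
  have hT : #T ≤ n := by simpa using card_le_univ T
  have hA : #A ≤ #T := card_le_card hAT
  rw [sdiff_eq_inter_compl, compl_inter, compl_compl, ← sdiff_eq_inter_compl,
    card_sdiff_of_subset hAT, show n - (#T - #A) = n - #T + #A by omega] at hdual
  rw [eq_div_iff (by positivity)]
  exact_mod_cast hdual

end Support

/-- For `S ⊆ T ⊆ [n]`,
`|C(S,T)| = |C| * Σ_{A ⊆ S} (-1)^{|A|} |C^⊥(T^c ∪ A)| / q^{n-|T|+|A|}`. -/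
theorem stmt1 {n : ℕ} (C : Submodule F (Fin n → F)) (S T : Finset (Fin n)) (hST : S ⊆ T) :
    (Set.ncard {x : Fin n → F | x ∈ C ∧ S ⊆ supp x ∧ supp x ⊆ T} : ℝ) =
      (Set.ncard (C : Set (Fin n → F)) : ℝ) *
        ∑ A ∈ S.powerset, (-1 : ℝ) ^ A.card *
          (Set.ncard {x : Fin n → F | x ∈ dualCode C ∧ supp x ⊆ Tᶜ ∪ A} : ℝ) /
            (Fintype.card F : ℝ) ^ (n - T.card + A.card) := by
  rw [setOf_subset_supp_and_supp_subset, ← Int.cast_natCast,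
    ncard_forall_ne_zero_eq_sum_powerset, Int.cast_sum, mul_sum]
  refine sum_congr rfl fun A hA ↦ ?_
  rw [setOf_mem_shortening_and_forall_eq_zero, Int.cast_mul, Int.cast_natCast,
    ncard_supp_subset_sdiff C ((mem_powerset.1 hA).trans hST)]
  push_cast
  ring
end

section
/- A nondegenerate linear code C ≤ F_q^n has locality r if and only if for every j ∈ [n], the number of codewords x ∈ C^⊥ with j ∈ supp(x) and 2 ≤ wt(x) ≤ r+1 is at least q - 1. -/
open Finset

variable {F : Type*} [Field F] [Fintype F] [DecidableEq F]

lemma exists_dual_of_recovery {n : ℕ} (C : Submodule F (Fin n → F)) (j : Fin n)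
    (S : Finset (Fin n)) (hjS : j ∉ S)
    (hloc : ∀ x ∈ C, ∀ y ∈ C, (∀ i ∈ S, x i = y i) → x j = y j) :
    ∃ v : Fin n → F, v ∈ dualCode C ∧ v j = -1 ∧ ∀ i, i ≠ j → i ∉ S → v i = 0 := by
  classical
  set φ : C →ₗ[F] ({i // i ∈ S} → F) := (projMap S).comp C.subtype with hφ
  set ψ : C →ₗ[F] F := (LinearMap.proj j).comp C.subtype with hψ
  have hker : LinearMap.ker φ ≤ LinearMap.ker ψ := by
    intro x hx
    have h0 : ∀ i ∈ S, (x : Fin n → F) i = (0 : Fin n → F) i := by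
      intro i hi
      have := congrFun (LinearMap.mem_ker.mp hx) ⟨i, hi⟩
      simpa [hφ, projMap, LinearMap.funLeft] using this
    have := hloc x.1 x.2 0 C.zero_mem h0
    simpa [hψ] using this
  obtain ⟨g, hg⟩ := LinearMap.exists_extend
    (((LinearMap.ker φ).liftQ ψ hker).comp (φ.quotKerEquivRange).symm.toLinearMap)
  have hgφ : ∀ x : C, g (φ x) = ψ x := by
    intro x
    have h1 : φ x = (LinearMap.range φ).subtype ⟨φ x, LinearMap.mem_range_self φ x⟩ := rfl
    rw [h1, ← LinearMap.comp_apply, hg]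
    simp only [LinearMap.comp_apply, LinearEquiv.coe_toLinearMap]
    rw [LinearMap.quotKerEquivRange_symm_apply_image]
    simp [Submodule.mkQ_apply]
  refine ⟨fun i => if h : i ∈ S then g (fun k => if (⟨i, h⟩ : {i // i ∈ S}) = k then 1 else 0)
      else if i = j then -1 else 0, ?_, by simp [hjS], ?_⟩
  · intro y hy
    have hsplit := Finset.sum_filter_add_sum_filter_not Finset.univ (fun i => i ∈ S)
      (fun i => (if h : i ∈ S then g (fun k => if (⟨i, h⟩ : {i // i ∈ S}) = k then 1 else 0)
        else if i = j then -1 else 0) * y i)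
    rw [← hsplit]
    have h2 : ∑ i ∈ Finset.univ.filter (fun i => i ∉ S),
        (if h : i ∈ S then g (fun k => if (⟨i, h⟩ : {i // i ∈ S}) = k then 1 else 0)
          else if i = j then -1 else 0) * y i = - y j := by
      rw [Finset.sum_eq_single_of_mem j (by simp [hjS])]
      · simp [hjS]
      · intro i hi hij
        simp only [Finset.mem_filter] at hi
        simp [hi.2, hij]
    have h3 : ∑ i ∈ Finset.univ.filter (fun i => i ∈ S),
        (if h : i ∈ S then g (fun k => if (⟨i, h⟩ : {i // i ∈ S}) = k then 1 else 0)
          else if i = j then -1 else 0) * y i = y j := by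
      have h4 := hgφ ⟨y, hy⟩
      rw [LinearMap.pi_apply_eq_sum_univ g (φ ⟨y, hy⟩)] at h4
      have h5 : ∀ k : {i // i ∈ S}, (φ ⟨y, hy⟩) k = y k.1 := fun k => rfl
      have h6 : (ψ ⟨y, hy⟩ : F) = y j := rfl
      rw [h6] at h4
      have hfe : Finset.univ.filter (fun i => i ∈ S) = S := by ext i; simp
      rw [hfe, Finset.sum_subtype (p := fun i => i ∈ S) S (fun i => Iff.rfl)]
      rw [← h4]
      refine Finset.sum_congr rfl fun k _ => ?_
      simp only [k.2, dif_pos, h5 k, smul_eq_mul]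
      ring
    rw [h2, h3]; ring
  · intro i hij hiS
    simp [hiS, hij]

lemma wt_smul {n : ℕ} (v : Fin n → F) (c : F) (hc : c ≠ 0) : wt (c • v) = wt v := by
  unfold wt
  congr 1
  ext i
  simp [hc]

/-- a nondegenerate code has locality `r` iff for every coordinate `j` there are
at least `q - 1` dual codewords of weight between `2` and `r+1` whose support contains `j`. -/
theorem stmt6 {n : ℕ} (C : Submodule F (Fin n → F)) (r : ℕ) (hnd : Nondegenerate C) :
    HasLocality C r ↔ ∀ j : Fin n,
      Fintype.card F - 1 ≤
        Set.ncard {x : Fin n → F | x ∈ dualCode C ∧ x j ≠ 0 ∧ 2 ≤ wt x ∧ wt x ≤ r + 1} := by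
  classical
  constructor
  · intro hloc j
    obtain ⟨S, hjS, hScard, hrec⟩ := hloc j
    obtain ⟨v, hvdual, hvj, hv0⟩ := exists_dual_of_recovery C j S hjS hrec
    have hvj' : v j ≠ 0 := by rw [hvj]; exact neg_ne_zero.mpr one_ne_zero
    have hwle : wt v ≤ r + 1 := by
      have hsub : Finset.univ.filter (fun i => v i ≠ 0) ⊆ insert j S := by
        intro i hi
        simp only [Finset.mem_filter] at hi
        by_contra h
        simp only [Finset.mem_insert, not_or] at h
        exact hi.2 (hv0 i h.1 h.2)
      calc wt v ≤ (insert j S).card := Finset.card_le_card hsub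
        _ ≤ S.card + 1 := Finset.card_insert_le _ _
        _ ≤ r + 1 := by omega
    have hw2 : 2 ≤ wt v := by
      obtain ⟨x, hx, hxj⟩ := hnd j
      by_contra h
      push_neg at h
      have hall : ∀ i, i ≠ j → v i = 0 := by
        intro i hij
        by_contra hvi
        have : 1 < (Finset.univ.filter (fun i => v i ≠ 0)).card := by
          apply Finset.one_lt_card.mpr
          exact ⟨i, by simp [hvi], j, by simp [hvj'], hij⟩
        unfold wt at h; omega
      have hsum : ∑ i, v i * x i = v j * x j := by
        apply Finset.sum_eq_single_of_mem j (Finset.mem_univ j)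
        intro i _ hij
        simp [hall i hij]
      have hd := hvdual x hx
      rw [hsum] at hd
      rcases mul_eq_zero.mp hd with h' | h'
      · exact hvj' h'
      · exact hxj h'
    have hinj : Function.Injective (fun c : F => c • v) := by
      intro c₁ c₂ hc
      have := congrFun hc j
      simp only [Pi.smul_apply, smul_eq_mul] at this
      exact mul_right_cancel₀ hvj' this
    have hsub : (fun c : F => c • v) '' {c : F | c ≠ 0} ⊆
        {x : Fin n → F | x ∈ dualCode C ∧ x j ≠ 0 ∧ 2 ≤ wt x ∧ wt x ≤ r + 1} := by
      rintro _ ⟨c, hc, rfl⟩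
      refine ⟨(dualCode C).smul_mem c hvdual, ?_, ?_, ?_⟩
      · simp only [Pi.smul_apply, smul_eq_mul]; exact mul_ne_zero hc hvj'
      · rw [wt_smul v c hc]; exact hw2
      · rw [wt_smul v c hc]; exact hwle
    have h1 : ({c : F | c ≠ 0}).ncard = Fintype.card F - 1 := by
      rw [Set.ncard_eq_toFinset_card']
      simp only [Set.toFinset_setOf]
      rw [Finset.filter_ne', Finset.card_erase_of_mem (Finset.mem_univ 0), Finset.card_univ]
    have h2 : ((fun c : F => c • v) '' {c : F | c ≠ 0}).ncard = Fintype.card F - 1 := by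
      rw [Set.ncard_image_of_injective _ hinj, h1]
    calc Fintype.card F - 1 = _ := h2.symm
      _ ≤ _ := Set.ncard_le_ncard hsub (Set.toFinite _)
  · intro h i
    have hlt : 1 ≤ Fintype.card F - 1 := by
      have := Fintype.one_lt_card (α := F)
      omega
    have hne : {x : Fin n → F | x ∈ dualCode C ∧ x i ≠ 0 ∧ 2 ≤ wt x ∧ wt x ≤ r + 1}.Nonempty := by
      exact Set.nonempty_of_ncard_ne_zero (Nat.one_le_iff_ne_zero.mp (le_trans hlt (h i)))
    obtain ⟨v, hvdual, hvi, hw2, hwle⟩ := hne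
    refine ⟨(supp v).erase i, Finset.notMem_erase i _, ?_, ?_⟩
    · have hmem : i ∈ supp v := by simp [supp, hvi]
      rw [Finset.card_erase_of_mem hmem]
      have : (supp v).card = wt v := rfl
      omega
    · intro x hx y hy hagree
      have hz : x - y ∈ C := C.sub_mem hx hy
      have hsum := hvdual (x - y) hz
      have heq : ∑ k, v k * (x - y) k = v i * (x - y) i := by
        apply Finset.sum_eq_single_of_mem i (Finset.mem_univ i)
        intro k _ hki
        by_cases hvk : v k = 0
        · simp [hvk]
        · have hkS : k ∈ (supp v).erase i := by simp [supp, hvk, hki]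
          have := hagree k hkS
          simp [Pi.sub_apply, this]
      rw [heq] at hsum
      rcases mul_eq_zero.mp hsum with h' | h'
      · exact absurd h' hvi
      · exact sub_eq_zero.mp h'
end

section
/- Let C ≤ F_q^n be a linear code of dimension k ≥ 2 with minimum distance d. Then d ≤ (q/(q+1)) * (n - k + 2). -/
open Finset

variable {F : Type*} [Field F] [Fintype F] [DecidableEq F]

/-- Singleton-type auxiliary lemma: a code of positive dimension contains a nonzero word of
low weight. -/
lemma exists_low_weight_aux {α : Type*} [Fintype α] [DecidableEq α] (D : Submodule F (α → F))
    (hD : 1 ≤ Module.finrank F D) :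
    ∃ x, x ∈ D ∧ x ≠ 0 ∧
      (Finset.univ.filter fun i => x i ≠ 0).card + (Module.finrank F D - 1)
        ≤ Fintype.card α := by
  classical
  have hle : Module.finrank F D ≤ Fintype.card α := by
    have h1 := Submodule.finrank_le D
    rwa [Module.finrank_pi] at h1
  obtain ⟨T, -, hT⟩ := Finset.exists_subset_card_eq
    (s := (Finset.univ : Finset α)) (n := Module.finrank F D - 1)
    (by simpa using by omega)
  set g : D →ₗ[F] ({ i // i ∈ T } → F) := (projMap T).comp D.subtype with hg
  have hker : LinearMap.ker g ≠ ⊥ := by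
    intro h
    have hinj : Function.Injective g := LinearMap.ker_eq_bot.mp h
    have h2 := LinearMap.finrank_le_finrank_of_injective hinj
    rw [Module.finrank_pi, Fintype.card_coe, hT] at h2
    omega
  rw [Submodule.ne_bot_iff] at hker
  obtain ⟨z, hzker, hz0⟩ := hker
  refine ⟨(z : α → F), z.2, ?_, ?_⟩
  · intro h
    exact hz0 (Subtype.ext h)
  · have hzT : ∀ i ∈ T, (z : α → F) i = 0 := by
      intro i hi
      have h0 : g z = 0 := hzker
      have h1 := congrFun h0 ⟨i, hi⟩
      simpa [hg, projMap, LinearMap.funLeft] using h1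
    have hsub : (Finset.univ.filter fun i => (z : α → F) i ≠ 0) ⊆ Tᶜ := by
      intro i hi
      simp only [Finset.mem_filter, Finset.mem_univ, true_and] at hi
      rw [Finset.mem_compl]
      intro hiT
      exact hi (hzT i hiT)
    have hcard := Finset.card_le_card hsub
    rw [Finset.card_compl, hT] at hcard
    omega

/-- Averaging identity for the sum of weights along a line of codewords. -/
lemma avg_sum_wt {n : ℕ} (c y : Fin n → F) :
    ∑ l : F, wt (y + l • c) =
      (Finset.univ.filter fun i => c i ≠ 0).card * (Fintype.card F - 1)
      + Fintype.card F * (Finset.univ.filter fun i => c i = 0 ∧ y i ≠ 0).card := by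
  classical
  have hswap : ∑ l : F, wt (y + l • c)
      = ∑ i : Fin n, (Finset.univ.filter fun l : F => y i + l * c i ≠ 0).card := by
    have hterm : ∀ l : F, wt (y + l • c)
        = ∑ i : Fin n, if y i + l * c i ≠ 0 then 1 else 0 := by
      intro l
      rw [wt, Finset.card_filter]
      simp [Pi.add_apply]
    rw [Finset.sum_congr rfl (fun l _ => hterm l), Finset.sum_comm]
    exact Finset.sum_congr rfl fun i _ => (Finset.card_filter _ _).symm
  rw [hswap]
  rw [← Finset.sum_filter_add_sum_filter_not Finset.univ (fun i => c i ≠ 0)]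
  congr 1
  · have hterm : ∀ i ∈ Finset.univ.filter (fun i : Fin n => c i ≠ 0),
        (Finset.univ.filter fun l : F => y i + l * c i ≠ 0).card = Fintype.card F - 1 := by
      intro i hi
      simp only [Finset.mem_filter, Finset.mem_univ, true_and] at hi
      have hone : (Finset.univ.filter fun l : F => y i + l * c i = 0) = {-y i / c i} := by
        ext l
        simp only [Finset.mem_filter, Finset.mem_univ, true_and, Finset.mem_singleton]
        constructor
        · intro h
          rw [eq_div_iff hi]
          linear_combination h
        · intro h
          rw [eq_div_iff hi] at h
          linear_combination h
      have hsplit := Finset.card_filter_add_card_filter_not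
        (s := (Finset.univ : Finset F)) (p := fun l : F => y i + l * c i ≠ 0)
      have hnn : (Finset.univ.filter fun l : F => ¬ (y i + l * c i ≠ 0))
          = (Finset.univ.filter fun l : F => y i + l * c i = 0) := by
        simp only [not_not]
      rw [hnn, hone] at hsplit
      simp only [Finset.card_singleton, Finset.card_univ] at hsplit
      omega
    rw [Finset.sum_congr rfl hterm, Finset.sum_const, smul_eq_mul]
  · have hA : (Finset.univ.filter fun i : Fin n => ¬ c i ≠ 0)
        = Finset.univ.filter fun i : Fin n => c i = 0 := by simp only [not_not]
    rw [hA]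
    have hterm : ∀ i ∈ Finset.univ.filter (fun i : Fin n => c i = 0),
        (Finset.univ.filter fun l : F => y i + l * c i ≠ 0).card
          = if y i ≠ 0 then Fintype.card F else 0 := by
      intro i hi
      simp only [Finset.mem_filter, Finset.mem_univ, true_and] at hi
      rw [show (Finset.univ.filter fun l : F => y i + l * c i ≠ 0)
            = if y i ≠ 0 then Finset.univ else ∅ by
          simp [hi, Finset.filter_const]]
      split <;> simp
    rw [Finset.sum_congr rfl hterm, ← Finset.sum_filter, Finset.filter_filter,
      Finset.sum_const, smul_eq_mul, mul_comm]

set_option maxHeartbeats 2000000 in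
set_option synthInstance.maxHeartbeats 500000 in
/-- `d ≤ (q/(q+1)) * (n - k + 2)`. -/
theorem stmt11 {n : ℕ} (C : Submodule F (Fin n → F)) (k d : ℕ)
    (hk2 : 2 ≤ k) (hk : Module.finrank F C = k)
    (hd1 : ∀ x ∈ C, x ≠ 0 → d ≤ wt x) (hd2 : ∃ x ∈ C, x ≠ 0 ∧ wt x = d) :
    (d : ℝ) ≤ (Fintype.card F : ℝ) / ((Fintype.card F : ℝ) + 1) * ((n : ℝ) - k + 2) := by
  classical
  obtain ⟨c, hcC, hc0, hcd⟩ := hd2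
  set q := Fintype.card F with hq
  have hq1 : 1 ≤ q := Fintype.card_pos
  set S : Finset (Fin n) := Finset.univ.filter (fun i => c i ≠ 0) with hS
  have hScard : S.card = d := by rw [hS]; exact hcd
  have hd0 : 0 < d := by
    rw [← hScard, Finset.card_pos]
    have hex : ∃ i, c i ≠ 0 := by
      by_contra h
      push_neg at h
      exact hc0 (funext h)
    obtain ⟨i, hi⟩ := hex
    exact ⟨i, by simp [hS, hi]⟩
  have hdn : d ≤ n := by
    have h1 : S.card ≤ Fintype.card (Fin n) := Finset.card_le_univ S
    rw [Fintype.card_fin] at h1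
    omega
  set π := projMap (F := F) Sᶜ with hπ
  set f : C →ₗ[F] ({ i // i ∈ Sᶜ } → F) := π.comp C.subtype with hf
  -- kernel of f is contained in the span of c
  have hkerle : LinearMap.ker f ≤ Submodule.comap C.subtype (Submodule.span F {c}) := by
    intro z hz
    rw [LinearMap.mem_ker] at hz
    rw [Submodule.mem_comap, Submodule.subtype_apply]
    have hz0 : ∀ i, i ∉ S → (z : Fin n → F) i = 0 := by
      intro i hiS
      have h1 := congrFun hz ⟨i, Finset.mem_compl.mpr hiS⟩
      simpa [hf, hπ, projMap, LinearMap.funLeft] using h1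
    by_cases hzz : (z : Fin n → F) = 0
    · rw [hzz]; exact Submodule.zero_mem _
    · have hex : ∃ i, (z : Fin n → F) i ≠ 0 := by
        by_contra h; push_neg at h; exact hzz (funext h)
      obtain ⟨i₀, hi₀⟩ := hex
      have hi₀S : i₀ ∈ S := by
        by_contra h; exact hi₀ (hz0 i₀ h)
      have hci₀ : c i₀ ≠ 0 := by
        simpa [hS, Finset.mem_filter] using hi₀S
      set yy := (z : Fin n → F) with hyy
      set a := yy i₀ / c i₀ with ha
      set w := yy - a • c with hw
      have hwC : w ∈ C := C.sub_mem z.2 (C.smul_mem a hcC)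
      have hwsupp : (Finset.univ.filter fun i => w i ≠ 0) ⊆ S.erase i₀ := by
        intro i hi
        simp only [Finset.mem_filter, Finset.mem_univ, true_and] at hi
        rw [Finset.mem_erase]
        constructor
        · rintro rfl
          apply hi
          simp [hw, ha, Pi.sub_apply, div_mul_cancel₀ _ hci₀]
        · by_contra hiS
          apply hi
          have hci : c i = 0 := by
            by_contra h; exact hiS (by simp [hS, h])
          simp [hw, hz0 i hiS, hci]
      have hw0 : w = 0 := by
        by_contra hw0
        have hge := hd1 w hwC hw0
        have hwt : wt w ≤ d - 1 := by
          have h1 := Finset.card_le_card hwsupp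
          rw [Finset.card_erase_of_mem hi₀S, hScard] at h1
          exact h1
        omega
      have hyc : yy = a • c := sub_eq_zero.mp (hw ▸ hw0)
      rw [Submodule.mem_span_singleton]
      exact ⟨a, hyc.symm⟩
  have hker1 : Module.finrank F (LinearMap.ker f) ≤ 1 := by
    have hspanle : Submodule.span F {c} ≤ C := by
      rw [Submodule.span_le, Set.singleton_subset_iff]; exact hcC
    have h1 : Module.finrank F (Submodule.comap C.subtype (Submodule.span F {c})) = 1 := by
      rw [LinearEquiv.finrank_eq (Submodule.comapSubtypeEquivOfLe hspanle)]
      exact finrank_span_singleton hc0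
    calc Module.finrank F (LinearMap.ker f)
        ≤ Module.finrank F (Submodule.comap C.subtype (Submodule.span F {c})) :=
          Submodule.finrank_mono hkerle
      _ = 1 := h1
  set m := Module.finrank F (LinearMap.range f) with hm
  have hrn := LinearMap.finrank_range_add_finrank_ker f
  rw [hk, ← hm] at hrn
  have hkm : k ≤ m + 1 := by omega
  have hm1 : 1 ≤ m := by omega
  have hcardcompl : Fintype.card { i // i ∈ Sᶜ } = n - d := by
    rw [Fintype.card_coe, Finset.card_compl, hScard, Fintype.card_fin]
  have hmn : m + d ≤ n := by
    have h1 : m ≤ Fintype.card { i // i ∈ Sᶜ } := by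
      have h2 := Submodule.finrank_le (LinearMap.range f)
      rwa [Module.finrank_pi, ← hm] at h2
    rw [hcardcompl] at h1
    omega
  obtain ⟨xb, hxbD, hxb0, hxbcard⟩ := exists_low_weight_aux (LinearMap.range f)
    (by rw [← hm]; omega)
  rw [← hm, hcardcompl] at hxbcard
  obtain ⟨z, hzeq⟩ := hxbD
  set y := (z : Fin n → F) with hy
  have hyC : y ∈ C := z.2
  have hxbval : ∀ j : {i // i ∈ Sᶜ}, xb j = y (j : Fin n) := fun j =>
    (congrFun hzeq j).symm
  have hπc : π c = 0 := by
    funext j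
    have hjc : c (j : Fin n) = 0 := by
      have hj := j.2
      rw [Finset.mem_compl] at hj
      by_contra h
      exact hj (by simp [hS, h])
    simpa [hπ, projMap, LinearMap.funLeft] using hjc
  have hπy : π y = xb := hzeq
  have hline : ∀ l : F, y + l • c ≠ 0 := by
    intro l h
    apply hxb0
    have h1 : π (y + l • c) = xb := by
      rw [map_add, map_smul, hπc, smul_zero, add_zero, hπy]
    rw [h, map_zero] at h1
    exact h1.symm
  have hsum_ge : q * d ≤ ∑ l : F, wt (y + l • c) := by
    calc q * d = ∑ _l : F, d := by rw [Finset.sum_const, Finset.card_univ, smul_eq_mul]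
      _ ≤ _ := Finset.sum_le_sum fun l _ =>
          hd1 _ (C.add_mem hyC (C.smul_mem l hcC)) (hline l)
  have havg := avg_sum_wt c y
  rw [← hS, hScard, ← hq] at havg
  set W0 := (Finset.univ.filter fun i : Fin n => c i = 0 ∧ y i ≠ 0).card with hW0
  have hsum : q * d ≤ d * (q - 1) + q * W0 := by
    rw [← havg]; exact hsum_ge
  -- identify W0 with the weight of xb
  have hwcards : (Finset.univ.filter fun j : {i // i ∈ Sᶜ} => xb j ≠ 0).card = W0 := by
    rw [hW0]
    refine Finset.card_bij (fun j _ => (j : Fin n)) ?_ ?_ ?_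
    · intro j hj
      simp only [Finset.mem_filter, Finset.mem_univ, true_and] at hj ⊢
      have hjc : c (j : Fin n) = 0 := by
        have h2 := j.2
        rw [Finset.mem_compl] at h2
        by_contra h
        exact h2 (by simp [hS, h])
      refine ⟨hjc, ?_⟩
      rw [← hxbval j]; exact hj
    · intro a _ b _ h
      exact Subtype.ext h
    · intro i hi
      simp only [Finset.mem_filter, Finset.mem_univ, true_and] at hi
      have hic : i ∈ Sᶜ := by
        rw [Finset.mem_compl]
        simp [hS, hi.1]
      refine ⟨⟨i, hic⟩, ?_, rfl⟩
      simp only [Finset.mem_filter, Finset.mem_univ, true_and]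
      rw [hxbval]
      exact hi.2
  rw [hwcards] at hxbcard
  -- gather the counting inequality: W0 + k + d ≤ n + 2
  have hcount : W0 + k + d ≤ n + 2 := by omega
  -- pass to the reals
  have hQ : (0:ℝ) < (q:ℝ) + 1 := by positivity
  rw [div_mul_eq_mul_div, le_div_iff₀ hQ]
  have h1 : (q:ℝ) * d ≤ (d:ℝ) * ((q:ℝ) - 1) + (q:ℝ) * W0 := by
    have h0 : (q:ℝ) * d ≤ (d:ℝ) * (((q - 1 : ℕ)):ℝ) + (q:ℝ) * W0 := by exact_mod_cast hsum
    rw [Nat.cast_sub hq1] at h0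
    simpa using h0
  have h2 : (W0:ℝ) + k + d ≤ (n:ℝ) + 2 := by exact_mod_cast hcount
  have h3 : (d:ℝ) ≤ (q:ℝ) * W0 := by linarith
  have h4 : (q:ℝ) * W0 ≤ (q:ℝ) * ((n:ℝ) - k + 2 - d) := by
    apply mul_le_mul_of_nonneg_left _ (by positivity)
    linarith
  nlinarith [h3, h4]
end

section
/- Let C ≤ F_q^n be an LRC of dimension k and locality r, with generalized weights d_i. Then for all 1 ≤ i ≤ k, d_i ≤ n - k + i - (⌈(k - (i-1))/r⌉ - 1). -/
open Finset

variable {F : Type*} [Field F] [Fintype F] [DecidableEq F]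

namespace Stmt16Aux

variable {F : Type*} [Field F] [Fintype F] [DecidableEq F] {n : ℕ}

/-- Evaluation at a coordinate as a linear map. -/
noncomputable def ev (j : Fin n) : (Fin n → F) →ₗ[F] F := LinearMap.proj j

/-- Codewords of `C` vanishing on `A`. -/
noncomputable def KK (C : Submodule F (Fin n → F)) (A : Finset (Fin n)) :
    Submodule F (Fin n → F) :=
  C ⊓ ⨅ j ∈ A, LinearMap.ker (ev j)

omit [Fintype F] [DecidableEq F] in
lemma mem_KK {C : Submodule F (Fin n → F)} {A : Finset (Fin n)} {x : Fin n → F} :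
    x ∈ KK C A ↔ x ∈ C ∧ ∀ j ∈ A, x j = 0 := by
  simp [KK, Submodule.mem_iInf, ev]

omit [Fintype F] [DecidableEq F] in
lemma KK_le (C : Submodule F (Fin n → F)) (A : Finset (Fin n)) : KK C A ≤ C :=
  inf_le_left

omit [Fintype F] [DecidableEq F] in
lemma KK_insert (C : Submodule F (Fin n → F)) (c : Fin n) (A : Finset (Fin n)) :
    KK C (insert c A) = KK C A ⊓ LinearMap.ker (ev c) := by
  ext x
  simp only [mem_KK, Submodule.mem_inf, LinearMap.mem_ker, ev, LinearMap.proj_apply,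
    Finset.forall_mem_insert]
  tauto

omit [Fintype F] [DecidableEq F] in
lemma kdrop (N : Submodule F (Fin n → F)) (c : Fin n) :
    Module.finrank F N ≤ Module.finrank F ↥(N ⊓ LinearMap.ker (ev c)) + 1 := by
  have h1 := LinearMap.finrank_range_add_finrank_ker ((ev (F := F) c).domRestrict N)
  have h2 : Module.finrank F ↥(LinearMap.range ((ev (F := F) c).domRestrict N)) ≤ 1 := by
    simpa using (LinearMap.range ((ev (F := F) c).domRestrict N)).finrank_le
  have h3 : Module.finrank F ↥(LinearMap.ker ((ev (F := F) c).domRestrict N))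
      = Module.finrank F ↥(N ⊓ LinearMap.ker (ev c)) := by
    rw [LinearMap.ker_domRestrict, ← Submodule.map_comap_subtype,
      Submodule.finrank_map_subtype_eq]
  omega

omit [Fintype F] in
lemma kk_union (C : Submodule F (Fin n → F)) (S A : Finset (Fin n)) :
    Module.finrank F ↥(KK C A) ≤ Module.finrank F ↥(KK C (A ∪ S)) + S.card := by
  classical
  induction S using Finset.induction_on with
  | empty => rw [Finset.union_empty]; simp
  | @insert a s ha ih =>
    have h1 : A ∪ insert a s = insert a (A ∪ s) := Finset.union_insert a A s
    have h2 : Module.finrank F ↥(KK C (A ∪ s))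
        ≤ Module.finrank F ↥(KK C (insert a (A ∪ s))) + 1 := by
      rw [KK_insert]; exact kdrop _ a
    have h3 : (insert a s).card = s.card + 1 := Finset.card_insert_of_notMem ha
    rw [h1]
    omega

end Stmt16Aux

/-- for an LRC of dimension `k` and locality `r`,
`d_i ≤ n - k + i - (⌈(k - (i-1))/r⌉ - 1)` for `1 ≤ i ≤ k`. -/
theorem stmt16 {n : ℕ} (C : Submodule F (Fin n → F)) (k r i : ℕ)
    (hloc : HasLocality C r) (hk : Module.finrank F C = k)
    (hi1 : 1 ≤ i) (hik : i ≤ k) :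
    (genWeight C i : ℤ) ≤
      (n : ℤ) - k + i - (⌈((k : ℚ) - ((i : ℚ) - 1)) / (r : ℚ)⌉ - 1) := by
  classical
  open Stmt16Aux in
  obtain ⟨t, ht⟩ : ∃ t : ℕ, t = (k - i) / r := ⟨_, rfl⟩
  have htr : t * r ≤ k - i := by rw [ht]; exact Nat.div_mul_le_self _ _
  have hceil : ⌈((k : ℚ) - ((i : ℚ) - 1)) / (r : ℚ)⌉ ≤ (t : ℤ) + 1 := by
    rcases Nat.eq_zero_or_pos r with hr | hr
    · subst hr
      simp only [Nat.cast_zero, div_zero, Int.ceil_zero]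
      positivity
    · have hkey : (k - i) + 1 ≤ (t + 1) * r := by
        obtain ⟨q, hq⟩ : ∃ q : ℕ, q = (k - i) % r := ⟨_, rfl⟩
        have h1 : r * t + q = k - i := by rw [ht, hq]; exact Nat.div_add_mod _ _
        have h2 : q < r := by rw [hq]; exact Nat.mod_lt _ hr
        have h3 : (t + 1) * r = r * t + r := by ring
        omega
      have hcast : ((k : ℚ) - ((i : ℚ) - 1)) = ((k - i : ℕ) : ℚ) + 1 := by
        rw [Nat.cast_sub hik]; ring
      rw [Int.ceil_le, hcast, div_le_iff₀ (by exact_mod_cast hr : (0 : ℚ) < (r : ℚ))]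
      exact_mod_cast hkey
  -- a recovery set that is already covered adds nothing to the vanishing conditions
  have hkill : ∀ (c : Fin n) (B : Finset (Fin n)),
      (∃ S : Finset (Fin n), S ⊆ B ∧
        ∀ x ∈ C, ∀ y ∈ C, (∀ j ∈ S, x j = y j) → x c = y c) →
      Stmt16Aux.KK C (insert c B) = Stmt16Aux.KK C B := by
    rintro c B ⟨S, hSB, hrec⟩
    rw [Stmt16Aux.KK_insert]
    refine inf_eq_left.mpr ?_
    intro x hx
    rw [Stmt16Aux.mem_KK] at hx
    have h0 := hrec x hx.1 0 C.zero_mem (fun j hj => by rw [hx.2 j (hSB hj)]; rfl)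
    simpa [Stmt16Aux.ev] using h0
  -- extracting a fresh coordinate from a nontrivial kernel
  have hnz : ∀ A : Finset (Fin n), 0 < Module.finrank F ↥(Stmt16Aux.KK C A) →
      ∃ c, c ∉ A := by
    intro A hA
    have hbot : Stmt16Aux.KK C A ≠ ⊥ := by
      intro h; rw [h] at hA; simp at hA
    obtain ⟨x, hx, hx0⟩ := (Stmt16Aux.KK C A).ne_bot_iff.mp hbot
    rw [Stmt16Aux.mem_KK] at hx
    obtain ⟨c, hc⟩ : ∃ c, x c ≠ 0 := by
      by_contra h; push_neg at h; exact hx0 (funext h)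
    exact ⟨c, fun hcA => hc (hx.2 c hcA)⟩
  -- greedy accumulation of recovery sets
  have G : ∀ m : ℕ, m * r + i ≤ k → ∃ A : Finset (Fin n),
      k ≤ Module.finrank F ↥(Stmt16Aux.KK C A) + m * r ∧
      k + m ≤ Module.finrank F ↥(Stmt16Aux.KK C A) + A.card := by
    intro m
    induction m with
    | zero =>
      intro _
      have hKe : Stmt16Aux.KK C ∅ = C := by simp [Stmt16Aux.KK]
      refine ⟨∅, ?_, ?_⟩ <;> rw [hKe, hk] <;> simp
    | succ m ih =>
      intro hm1
      have hmr : (m + 1) * r = m * r + r := by ring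
      obtain ⟨A, hA1, hA2⟩ := ih (by omega)
      have hpos : 0 < Module.finrank F ↥(Stmt16Aux.KK C A) := by omega
      obtain ⟨c, hcA⟩ := hnz A hpos
      obtain ⟨S, hcS, hScard, hrec⟩ := hloc c
      have hcAS : c ∉ A ∪ S := by simp [hcA, hcS]
      have hU : A ∪ (S \ A) = A ∪ S := Finset.union_sdiff_self_eq_union
      have hkill' : Stmt16Aux.KK C (insert c (A ∪ S)) = Stmt16Aux.KK C (A ∪ S) :=
        hkill c (A ∪ S) ⟨S, Finset.subset_union_right, hrec⟩
      have hdun : Module.finrank F ↥(Stmt16Aux.KK C A)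
          ≤ Module.finrank F ↥(Stmt16Aux.KK C (A ∪ S)) + (S \ A).card := by
        rw [← hU]; exact Stmt16Aux.kk_union C (S \ A) A
      have hcard : (insert c (A ∪ S)).card = A.card + (S \ A).card + 1 := by
        rw [Finset.card_insert_of_notMem hcAS, ← hU,
          Finset.card_union_of_disjoint Finset.disjoint_sdiff]
      have hsr : (S \ A).card ≤ r :=
        le_trans (Finset.card_le_card Finset.sdiff_subset) hScard
      refine ⟨insert c (A ∪ S), ?_, ?_⟩ <;> rw [hkill'] <;> omega
  -- padding with arbitrary fresh coordinates
  have P : ∀ (d : ℕ) (A : Finset (Fin n)),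
      i ≤ Module.finrank F ↥(Stmt16Aux.KK C A) →
      k + t ≤ Module.finrank F ↥(Stmt16Aux.KK C A) + A.card →
      k + t ≤ i + A.card + d →
      ∃ T : Finset (Fin n), k + t ≤ i + T.card ∧
        i ≤ Module.finrank F ↥(Stmt16Aux.KK C T) := by
    intro d
    induction d with
    | zero =>
      intro A h1 h2 h3
      exact ⟨A, by omega, h1⟩
    | succ d ih =>
      intro A h1 h2 h3
      by_cases hbig : k + t ≤ i + A.card
      · exact ⟨A, hbig, h1⟩
      · have hpos : 0 < Module.finrank F ↥(Stmt16Aux.KK C A) := by omega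
        obtain ⟨c, hcA⟩ := hnz A hpos
        have hd : Module.finrank F ↥(Stmt16Aux.KK C A)
            ≤ Module.finrank F ↥(Stmt16Aux.KK C (insert c A)) + 1 := by
          rw [Stmt16Aux.KK_insert]; exact Stmt16Aux.kdrop _ c
        have hcard : (insert c A).card = A.card + 1 := Finset.card_insert_of_notMem hcA
        exact ih (insert c A) (by omega) (by omega) (by omega)
  have hGt : t * r + i ≤ k := by omega
  obtain ⟨A, hA1, hA2⟩ := G t hGt
  have hAi : i ≤ Module.finrank F ↥(Stmt16Aux.KK C A) := by omega
  obtain ⟨T, hT1, hT2⟩ := P (k + t) A hAi hA2 (by omega)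
  -- build an `i`-dimensional subcode supported off `T`
  let b := Module.finBasis F ↥(Stmt16Aux.KK C T)
  let v : Fin i → ↥(Stmt16Aux.KK C T) := fun j => b (Fin.castLE hT2 j)
  have hli : LinearIndependent F v :=
    b.linearIndependent.comp _ (Fin.castLE_injective hT2)
  let W : Submodule F ↥(Stmt16Aux.KK C T) := Submodule.span F (Set.range v)
  have hWi : Module.finrank F ↥W = i := by
    rw [finrank_span_eq_card hli, Fintype.card_fin]
  let D : Submodule F (Fin n → F) := W.map (Stmt16Aux.KK C T).subtype
  have hDK : D ≤ Stmt16Aux.KK C T := Submodule.map_subtype_le _ W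
  have hDle : D ≤ C := le_trans hDK (Stmt16Aux.KK_le C T)
  have hDi : Module.finrank F ↥D = i :=
    (Submodule.finrank_map_subtype_eq _ W).trans hWi
  have hsupp : {j : Fin n | ∃ x ∈ D, x j ≠ 0} ⊆ (↑Tᶜ : Set (Fin n)) := by
    rintro j ⟨x, hxD, hxj⟩
    have hxK : x ∈ Stmt16Aux.KK C T := hDK hxD
    rw [Stmt16Aux.mem_KK] at hxK
    simp only [Finset.coe_compl, Set.mem_compl_iff, Finset.mem_coe]
    intro hjT
    exact hxj (hxK.2 j hjT)
  have hncard : Set.ncard {j : Fin n | ∃ x ∈ D, x j ≠ 0} ≤ n - T.card := by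
    calc Set.ncard {j : Fin n | ∃ x ∈ D, x j ≠ 0}
        ≤ Set.ncard (↑Tᶜ : Set (Fin n)) := Set.ncard_le_ncard hsupp (Set.toFinite _)
      _ = Tᶜ.card := Set.ncard_coe_finset _
      _ = n - T.card := by rw [Finset.card_compl, Fintype.card_fin]
  have hgw : genWeight C i ≤ Set.ncard {j : Fin n | ∃ x ∈ D, x j ≠ 0} :=
    Nat.sInf_le ⟨D, hDle, hDi, rfl⟩
  have hTn : T.card ≤ n := le_trans (Finset.card_le_univ T) (by simp)
  have hfin : (genWeight C i : ℤ) ≤ (n : ℤ) - T.card := by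
    have h := le_trans hgw hncard
    have h' : (genWeight C i : ℤ) ≤ ((n - T.card : ℕ) : ℤ) := by exact_mod_cast h
    rwa [Nat.cast_sub hTn] at h'
  have hT1' : (k : ℤ) + t ≤ i + T.card := by exact_mod_cast hT1
  linarith [hceil, hfin, hT1']
end

section
/- Let C ≤ F_q^n be an LRC of dimension k ≥ 2 and locality r with minimum distance d. Then d ≤ (q/(q+1)) * (n - k - ⌈(k-1)/r⌉ + 3). -/
open Finset

variable {F : Type*} [Field F] [Fintype F] [DecidableEq F]

open Module LinearMap

set_option linter.unusedSectionVars false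

/-- Auxiliary: shortened code on a finset. -/
noncomputable def Csub (C : Submodule F (Fin n → F)) (T : Finset (Fin n)) :
    Submodule F (Fin n → F) :=
  C ⊓ ⨅ i ∈ T, LinearMap.ker (LinearMap.proj i : (Fin n → F) →ₗ[F] F)

lemma mem_Csub {C : Submodule F (Fin n → F)} {T : Finset (Fin n)} {x : Fin n → F} :
    x ∈ Csub C T ↔ x ∈ C ∧ ∀ i ∈ T, x i = 0 := by
  simp [Csub, Submodule.mem_iInf]

lemma Csub_le (C : Submodule F (Fin n → F)) (T : Finset (Fin n)) : Csub C T ≤ C :=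
  inf_le_left

lemma Csub_anti (C : Submodule F (Fin n → F)) {T T' : Finset (Fin n)} (h : T ⊆ T') :
    Csub C T' ≤ Csub C T := by
  intro x hx
  rw [mem_Csub] at hx ⊢
  exact ⟨hx.1, fun i hi => hx.2 i (h hi)⟩

lemma Csub_empty (C : Submodule F (Fin n → F)) : Csub C (∅ : Finset (Fin n)) = C := by
  simp [Csub]

lemma finrank_le_inf_ker (p : Submodule F (Fin n → F)) (f : (Fin n → F) →ₗ[F] F) :
    finrank F p ≤ finrank F ↥(p ⊓ LinearMap.ker f) + 1 := by
  have h := (f.domRestrict p).finrank_range_add_finrank_ker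
  have h1 : finrank F (LinearMap.range (f.domRestrict p)) ≤ 1 := by
    simpa using Submodule.finrank_le (LinearMap.range (f.domRestrict p))
  have h2 : finrank F (LinearMap.ker (f.domRestrict p)) = finrank F ↥(p ⊓ LinearMap.ker f) := by
    rw [LinearMap.ker_domRestrict, ← Submodule.finrank_map_subtype_eq, Submodule.map_comap_subtype]
  omega

lemma Csub_insert_inf (C : Submodule F (Fin n → F)) (T : Finset (Fin n)) (i : Fin n) :
    Csub C (insert i T) = Csub C T ⊓ LinearMap.ker (LinearMap.proj i : (Fin n → F) →ₗ[F] F) := by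
  ext x
  simp only [Submodule.mem_inf, mem_Csub, LinearMap.mem_ker, LinearMap.proj_apply,
    Finset.mem_insert, forall_eq_or_imp]
  tauto

lemma finrank_Csub_insert (C : Submodule F (Fin n → F)) (T : Finset (Fin n)) (i : Fin n) :
    finrank F (Csub C T) ≤ finrank F (Csub C (insert i T)) + 1 := by
  rw [Csub_insert_inf]
  exact finrank_le_inf_ker _ _

lemma finrank_Csub_union (C : Submodule F (Fin n → F)) (T S : Finset (Fin n)) :
    finrank F (Csub C T) ≤ finrank F (Csub C (T ∪ S)) + S.card := by
  classical
  induction S using Finset.induction_on with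
  | empty => rw [Finset.union_empty, Finset.card_empty]; omega
  | @insert a S ha ih =>
    rw [Finset.union_insert, Finset.card_insert_of_notMem ha]
    have := finrank_Csub_insert C (T ∪ S) a
    omega

lemma Csub_insert_of_local (C : Submodule F (Fin n → F)) {i : Fin n} {S : Finset (Fin n)}
    (hrec : ∀ x ∈ C, ∀ y ∈ C, (∀ j ∈ S, x j = y j) → x i = y i) (T : Finset (Fin n)) :
    Csub C (insert i (T ∪ S)) = Csub C (T ∪ S) := by
  refine le_antisymm (Csub_anti C (Finset.subset_insert _ _)) ?_
  intro x hx
  rw [mem_Csub] at hx ⊢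
  obtain ⟨hxC, hx0⟩ := hx
  have hxi : x i = 0 := by
    have := hrec x hxC 0 C.zero_mem
      (fun j hj => by rw [hx0 j (Finset.mem_union_right _ hj)]; rfl)
    simpa using this
  refine ⟨hxC, fun j hj => ?_⟩
  rcases Finset.mem_insert.mp hj with h | h
  · rw [h]; exact hxi
  · exact hx0 j h

lemma exists_decrease (C : Submodule F (Fin n → F)) {T : Finset (Fin n)}
    (h : Csub C T ≠ ⊥) :
    ∃ i : Fin n, i ∉ T ∧
      finrank F (Csub C (insert i T)) < finrank F (Csub C T) := by
  obtain ⟨x, hxT, hx0⟩ := Submodule.exists_mem_ne_zero_of_ne_bot h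
  obtain ⟨i, hxi⟩ : ∃ i, x i ≠ 0 := by
    by_contra hc
    push_neg at hc
    exact hx0 (funext hc)
  have hiT : i ∉ T := fun hiT => hxi ((mem_Csub.mp hxT).2 i hiT)
  refine ⟨i, hiT, Submodule.finrank_lt_finrank_of_lt ?_⟩
  refine lt_of_le_of_ne (Csub_anti C (Finset.subset_insert _ _)) (fun he => ?_)
  have : x ∈ Csub C (insert i T) := he ▸ hxT
  exact hxi ((mem_Csub.mp this).2 i (Finset.mem_insert_self _ _))

lemma Csub_ne_bot (C : Submodule F (Fin n → F)) {T : Finset (Fin n)}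
    (h : 0 < finrank F (Csub C T)) : Csub C T ≠ ⊥ := by
  intro hb
  rw [hb, finrank_bot] at h
  omega

lemma group_phase (C : Submodule F (Fin n → F)) (k r : ℕ)
    (hk : finrank F C = k) (hloc : HasLocality C r) :
    ∀ j : ℕ, j * r + 2 ≤ k → ∃ T : Finset (Fin n),
      k ≤ finrank F (Csub C T) + j * r ∧ k + j ≤ T.card + finrank F (Csub C T) := by
  intro j
  induction j with
  | zero =>
    intro _
    have h0 : finrank F (Csub C (∅ : Finset (Fin n))) = k := by rw [Csub_empty]; exact hk
    exact ⟨∅, by omega, by rw [Finset.card_empty]; omega⟩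
  | succ j ih =>
    intro hj
    rw [Nat.succ_mul] at hj
    obtain ⟨T, hT1, hT2⟩ := ih (by omega)
    have hfr : 0 < finrank F (Csub C T) := by omega
    obtain ⟨x, hxT, hx0⟩ := Submodule.exists_mem_ne_zero_of_ne_bot (Csub_ne_bot C hfr)
    obtain ⟨i, hxi⟩ : ∃ i, x i ≠ 0 := by
      by_contra hc; push_neg at hc; exact hx0 (funext hc)
    have hiT : i ∉ T := fun hiT => hxi ((mem_Csub.mp hxT).2 i hiT)
    obtain ⟨S, hiS, hScard, hrec⟩ := hloc i
    refine ⟨insert i (T ∪ S), ?_, ?_⟩ <;>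
    · have heq := Csub_insert_of_local C hrec T
      have hdrop := finrank_Csub_union C T (S \ T)
      rw [Finset.union_sdiff_self_eq_union] at hdrop
      have hsub : (S \ T).card ≤ r := le_trans (Finset.card_le_card (Finset.sdiff_subset)) hScard
      have hcard : (insert i (T ∪ S)).card = T.card + (S \ T).card + 1 := by
        rw [Finset.card_insert_of_notMem (by simp [hiT, hiS]),
          ← Finset.union_sdiff_self_eq_union, Finset.card_union_of_disjoint Finset.disjoint_sdiff]
      have hm : (j + 1) * r = j * r + r := Nat.succ_mul j r
      rw [heq]
      omega

lemma fill_phase (C : Submodule F (Fin n → F)) :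
    ∀ b : ℕ, ∀ T : Finset (Fin n), finrank F (Csub C T) ≤ b + 2 →
      2 ≤ finrank F (Csub C T) →
      ∃ T' : Finset (Fin n), finrank F (Csub C T') = 2 ∧
        T.card + finrank F (Csub C T) ≤ T'.card + 2 := by
  intro b
  induction b with
  | zero => intro T h1 h2; exact ⟨T, by omega, by omega⟩
  | succ b ih =>
    intro T h1 h2
    by_cases he : finrank F (Csub C T) = 2
    · exact ⟨T, he, by omega⟩
    · obtain ⟨i, hiT, hlt⟩ := exists_decrease C (T := T) (Csub_ne_bot C (T := T) (by omega))
      have hge := finrank_Csub_insert C T i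
      obtain ⟨T', hT'1, hT'2⟩ := ih (insert i T) (by omega) (by omega)
      rw [Finset.card_insert_of_notMem hiT] at hT'2
      exact ⟨T', hT'1, by omega⟩

lemma plotkin (D : Submodule F (Fin n → F)) (hD : finrank F D = 2) (M : Finset (Fin n))
    (hM : ∀ x ∈ D, ∀ j : Fin n, x j ≠ 0 → j ∈ M) :
    ∃ x ∈ D, x ≠ 0 ∧
      (Fintype.card F ^ 2 - 1) * wt x ≤ (Fintype.card F ^ 2 - Fintype.card F) * M.card := by
  classical
  set q := Fintype.card F with hq
  have hq2 : 2 ≤ q := Fintype.one_lt_card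
  let sD : Finset (Fin n → F) := Finset.univ.filter (· ∈ D)
  have hmem : ∀ x, x ∈ sD ↔ x ∈ D := by intro x; simp [sD]
  have hcardD : sD.card = q ^ 2 := by
    have h1 : Fintype.card D = q ^ 2 := by
      rw [card_eq_pow_finrank (K := F) (V := D), hD]
    rw [← h1, Fintype.card_subtype]
  let sD0 := sD.erase 0
  have hcardD0 : sD0.card = q ^ 2 - 1 := by
    rw [Finset.card_erase_of_mem ((hmem 0).mpr D.zero_mem), hcardD]
  -- column sums
  have hcol : ∀ j : Fin n, (sD0.filter fun x => x j ≠ 0).card ≤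
      if j ∈ M then q ^ 2 - q else 0 := by
    intro j
    by_cases hjM : j ∈ M
    · rw [if_pos hjM]
      set K := D ⊓ LinearMap.ker (LinearMap.proj j : (Fin n → F) →ₗ[F] F) with hK
      have hfrK : 1 ≤ finrank F K := by
        have h := finrank_le_inf_ker D (LinearMap.proj j : (Fin n → F) →ₗ[F] F)
        rw [← hK] at h
        omega
      let sK : Finset (Fin n → F) := Finset.univ.filter (· ∈ K)
      have hcardK : q ≤ sK.card := by
        have h1 : Fintype.card K = q ^ finrank F K := by
          rw [card_eq_pow_finrank (K := F) (V := K)]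
        have h2 : sK.card = q ^ finrank F K := by rw [← h1, Fintype.card_subtype]
        rw [h2]
        calc q = q ^ 1 := (pow_one q).symm
          _ ≤ q ^ finrank F K := Nat.pow_le_pow_right (by omega) hfrK
      have hsub : (sD0.filter fun x => x j ≠ 0) ⊆ sD \ sK := by
        intro x hx
        simp only [Finset.mem_filter, Finset.mem_erase, sD0] at hx
        obtain ⟨⟨hx0, hxD⟩, hxj⟩ := hx
        rw [Finset.mem_sdiff]
        refine ⟨hxD, fun hxK => ?_⟩
        have : x ∈ K := by simpa [sK] using hxK
        exact hxj (by simpa using this.2)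
      have hKsub : sK ⊆ sD := by
        intro x hx
        simp only [Finset.mem_filter, Finset.mem_univ, true_and, sK, sD] at hx ⊢
        exact hx.1
      calc (sD0.filter fun x => x j ≠ 0).card ≤ (sD \ sK).card := Finset.card_le_card hsub
        _ = sD.card - sK.card := Finset.card_sdiff_of_subset hKsub
        _ ≤ q ^ 2 - q := by omega
    · rw [if_neg hjM]
      rw [Nat.le_zero, Finset.card_eq_zero, Finset.filter_eq_empty_iff]
      intro x hx
      simp only [Finset.mem_erase, sD0] at hx
      have hxD := (hmem x).mp hx.2
      intro hxj
      exact hjM (hM x hxD j hxj)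
  -- double counting
  have hsum : ∑ x ∈ sD0, wt x ≤ M.card * (q ^ 2 - q) := by
    have h1 : ∑ x ∈ sD0, wt x = ∑ j : Fin n, (sD0.filter fun x => x j ≠ 0).card := by
      simp only [wt, Finset.card_filter]
      rw [Finset.sum_comm]
    rw [h1]
    calc ∑ j : Fin n, (sD0.filter fun x => x j ≠ 0).card
        ≤ ∑ j : Fin n, if j ∈ M then q ^ 2 - q else 0 := Finset.sum_le_sum fun j _ => hcol j
      _ = M.card * (q ^ 2 - q) := by
          rw [Finset.sum_ite_mem, Finset.univ_inter, Finset.sum_const, smul_eq_mul]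
  -- averaging
  have hne : sD0.Nonempty := by
    obtain ⟨x0, hx0D, hx00⟩ := Submodule.exists_mem_ne_zero_of_ne_bot
      (show D ≠ ⊥ by intro hb; rw [hb, finrank_bot] at hD; omega)
    exact ⟨x0, Finset.mem_erase.mpr ⟨hx00, (hmem x0).mpr hx0D⟩⟩
  have hkey : ∑ x ∈ sD0, (q ^ 2 - 1) * wt x ≤ ∑ _x ∈ sD0, (q ^ 2 - q) * M.card := by
    rw [← Finset.mul_sum, Finset.sum_const, hcardD0, smul_eq_mul]
    calc (q ^ 2 - 1) * ∑ x ∈ sD0, wt x ≤ (q ^ 2 - 1) * (M.card * (q ^ 2 - q)) :=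
          Nat.mul_le_mul_left _ hsum
      _ = (q ^ 2 - 1) * ((q ^ 2 - q) * M.card) := by ring
  obtain ⟨x, hx, hle⟩ := Finset.exists_le_of_sum_le hne hkey
  rw [Finset.mem_erase] at hx
  exact ⟨x, (hmem x).mp hx.2, hx.1, hle⟩

/-- for an LRC with `k ≥ 2` and locality `r`,
`d ≤ (q/(q+1)) * (n - k - ⌈(k-1)/r⌉ + 3)`. -/
theorem stmt19 {n : ℕ} (C : Submodule F (Fin n → F)) (k d r : ℕ)
    (hk2 : 2 ≤ k) (hloc : HasLocality C r) (hk : Module.finrank F C = k)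
    (hd1 : ∀ x ∈ C, x ≠ 0 → d ≤ wt x) (hd2 : ∃ x ∈ C, x ≠ 0 ∧ wt x = d) :
    (d : ℚ) ≤ (Fintype.card F : ℚ) / ((Fintype.card F : ℚ) + 1) *
      ((n : ℚ) - k - (⌈((k : ℚ) - 1) / (r : ℚ)⌉ : ℚ) + 3) := by
  classical
  -- r is positive
  have hr : 1 ≤ r := by
    by_contra hr0
    push_neg at hr0
    have hC : C = ⊥ := by
      rw [Submodule.eq_bot_iff]
      intro x hx
      funext i
      obtain ⟨S, -, hScard, hrec⟩ := hloc i
      have hS : S = ∅ := Finset.card_eq_zero.mp (by omega)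
      have := hrec x hx 0 C.zero_mem (by simp [hS])
      simpa using this
    rw [hC, finrank_bot] at hk
    omega
  -- ceiling arithmetic
  set c : ℤ := ⌈((k : ℚ) - 1) / (r : ℚ)⌉ with hc
  have hr1 : (1 : ℚ) ≤ (r : ℚ) := by exact_mod_cast hr
  have hrpos : (0 : ℚ) < (r : ℚ) := by linarith
  have hk2' : (2 : ℚ) ≤ (k : ℚ) := by exact_mod_cast hk2
  have hc1 : 1 ≤ c := by
    have : (0 : ℤ) < c := by
      rw [hc, Int.lt_ceil]
      push_cast
      exact div_pos (by linarith) hrpos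
    omega
  have hckZ : (c - 1) * (r : ℤ) ≤ (k : ℤ) - 2 := by
    have h1 : (c : ℚ) < ((k : ℚ) - 1) / (r : ℚ) + 1 := by
      rw [hc]; exact Int.ceil_lt_add_one _
    have h2 : ((c : ℚ) - 1) * (r : ℚ) < (k : ℚ) - 1 := by
      rw [← lt_div_iff₀ hrpos]
      linarith
    have h3 : ((c - 1) * (r : ℤ) : ℤ) < (k : ℤ) - 1 := by exact_mod_cast (by push_cast; linarith : (((c - 1) * (r : ℤ) : ℤ) : ℚ) < ((k : ℤ) : ℚ) - 1)
    omega
  set m : ℕ := (c - 1).toNat with hm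
  have hmc : (m : ℤ) = c - 1 := Int.toNat_of_nonneg (by omega)
  have hmr : m * r + 2 ≤ k := by
    have h : (m : ℤ) * (r : ℤ) + 2 ≤ (k : ℤ) := by rw [hmc]; omega
    exact_mod_cast h
  -- greedy construction
  obtain ⟨T, hT1, hT2⟩ := group_phase C k r hk hloc m hmr
  obtain ⟨T2, hT2fr, hT2c⟩ :=
    fill_phase C (finrank F (Csub C T)) T (by omega) (by omega)
  have hT2card : k + m ≤ T2.card + 2 := le_trans hT2 hT2c
  -- Plotkin averaging on the shortened code
  obtain ⟨x, hxD, hx0, hxle⟩ := plotkin (Csub C T2) hT2fr T2ᶜ (fun x hx j hj => by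
    rw [Finset.mem_compl]
    intro hjT2
    exact hj ((mem_Csub.mp hx).2 j hjT2))
  have hxC : x ∈ C := Csub_le C T2 hxD
  have hdwt : d ≤ wt x := hd1 x hxC hx0
  set q := Fintype.card F with hqdef
  have hq2 : 2 ≤ q := Fintype.one_lt_card
  have hMcard : ((T2ᶜ.card : ℤ)) ≤ (n : ℤ) - (k : ℤ) - c + 3 := by
    have h1 : T2ᶜ.card = n - T2.card := by
      rw [Finset.card_compl, Fintype.card_fin]
    have h2 : T2.card ≤ n := by
      have := Finset.card_le_univ T2
      simpa using this
    omega
  have hqq : q ≤ q ^ 2 := Nat.le_self_pow (by omega) q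
  have hq1 : 1 ≤ q ^ 2 := by omega
  have hnum : ((q : ℚ) ^ 2 - 1) * (d : ℚ) ≤ ((q : ℚ) ^ 2 - (q : ℚ)) * (T2ᶜ.card : ℚ) := by
    have h := le_trans (Nat.mul_le_mul_left (q ^ 2 - 1) hdwt) hxle
    have h' := (Nat.cast_le (α := ℚ)).mpr h
    push_cast [Nat.cast_sub hq1, Nat.cast_sub hqq] at h'
    convert h' using 2 <;> push_cast <;> ring
  have hQ2 : (2 : ℚ) ≤ (q : ℚ) := by exact_mod_cast hq2
  have hB : ((T2ᶜ.card : ℚ)) ≤ (n : ℚ) - (k : ℚ) - (c : ℚ) + 3 := by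
    exact_mod_cast hMcard
  rw [div_mul_eq_mul_div, le_div_iff₀ (by linarith : (0 : ℚ) < (q : ℚ) + 1)]
  have h5 : ((q : ℚ) ^ 2 - (q : ℚ)) * (T2ᶜ.card : ℚ) ≤
      ((q : ℚ) ^ 2 - (q : ℚ)) * ((n : ℚ) - (k : ℚ) - (c : ℚ) + 3) :=
    mul_le_mul_of_nonneg_left hB (by nlinarith)
  have h6 : (d : ℚ) * ((q : ℚ) + 1) * ((q : ℚ) - 1) ≤
      (q : ℚ) * ((n : ℚ) - (k : ℚ) - (c : ℚ) + 3) * ((q : ℚ) - 1) := by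
    calc (d : ℚ) * ((q : ℚ) + 1) * ((q : ℚ) - 1) = ((q : ℚ) ^ 2 - 1) * d := by ring
      _ ≤ ((q : ℚ) ^ 2 - (q : ℚ)) * (T2ᶜ.card : ℚ) := hnum
      _ ≤ ((q : ℚ) ^ 2 - (q : ℚ)) * ((n : ℚ) - (k : ℚ) - (c : ℚ) + 3) := h5
      _ = (q : ℚ) * ((n : ℚ) - (k : ℚ) - (c : ℚ) + 3) * ((q : ℚ) - 1) := by ring
  exact le_of_mul_le_mul_right h6 (by linarith)
end
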